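/- arXiv:1308.6790 — 2 statements merged into one kernel-verified Lean document; each statement's English description precedes it below -/
import Mathlib

section
/- Let u0, u1, u2 ∈ K[t0,t1] be homogeneous of degree d ≥ 1 with gcd 1, and let p = (p0,p1,p2), q = (q0,q1,q2) be a basis of the syzygy module of (u0,u1,u2) with p, q homogeneous of degrees μ and d-μ respectively. Then there exists a nonzero constant c ∈ K such that the cross product p × q = c·(u0, u1, u2). -/
/-!
Since `p` and `q` are syzygies of `u`, the vector triple product gives `u × (p × q) = 0`, so
`w := p × q` is proportional to `u` componentwise, and `w ≠ 0` because `p`, `q` are independent.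
As `u` has unit content in the UFD `K[t₀, t₁]`, proportionality forces `w = r • u` for a single
polynomial `r`; both `w` and `u` are homogeneous of degree `μ + (d - μ) = d`, so `r` is a
nonzero constant.
-/

open MvPolynomial Matrix

theorem mul_eq_mul_of_cross_eq_zero {R : Type*} [CommRing R] {u w : Fin 3 → R}
    (huw : u ⨯₃ w = 0) (i j : Fin 3) : u i * w j = u j * w i := by
  have h := congrFun (cross_cross_eq_smul_sub_smul' (Pi.single i 1) u w) j
  simp only [huw, map_zero, Pi.zero_apply, Pi.sub_apply, Pi.smul_apply, smul_eq_mul,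
    single_one_dotProduct, dotProduct_single_one] at h
  linear_combination h

theorem cross_ne_zero_of_linearIndependent {R : Type*} [CommRing R] [Nontrivial R]
    {p q : Fin 3 → R} (hpq : LinearIndependent R ![p, q]) : p ⨯₃ q ≠ 0 := by
  intro h
  obtain ⟨i, hi⟩ : ∃ i, q i ≠ 0 := Function.ne_iff.1 (by simpa using hpq.ne_zero 1 : q ≠ 0)
  refine hi (LinearIndependent.pair_iff.1 hpq (q i) (-p i) (funext fun j => ?_)).1
  simp only [Pi.add_apply, Pi.smul_apply, smul_eq_mul, Pi.zero_apply]
  linear_combination -mul_eq_mul_of_cross_eq_zero h i j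

theorem isHomogeneous_cross_apply {σ R : Type*} [CommRing R] {m n : ℕ}
    {p q : Fin 3 → MvPolynomial σ R} (hp : ∀ i, (p i).IsHomogeneous m)
    (hq : ∀ i, (q i).IsHomogeneous n) (i : Fin 3) : ((p ⨯₃ q) i).IsHomogeneous (m + n) := by
  fin_cases i <;> exact ((hp _).mul (hq _)).sub ((hp _).mul (hq _))

theorem exists_eq_smul_of_mul_eq_mul {ι R : Type*} [CommMonoidWithZero R]
    [UniqueFactorizationMonoid R] {u w : ι → R} (hu : ∀ r, (∀ i, r ∣ u i) → IsUnit r)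
    (hw : w ≠ 0) (huw : ∀ i j, u i * w j = u j * w i) : ∃ r : R, w = r • u := by
  obtain ⟨i, hi⟩ := Function.ne_iff.1 hw
  -- Write `w i = c a`, `u i = c b` with `a`, `b` coprime; then `b ∣ a u j` forces `b ∣ u j`.
  obtain ⟨a, b, c, hab, hca, hcb⟩ := UniqueFactorizationMonoid.exists_reduced_factors _ hi (u i)
  have hc : c ≠ 0 := left_ne_zero_of_mul (hca ▸ hi)
  have hbw : ∀ j, b * w j = a * u j := fun j =>
    mul_left_cancel₀ hc (by rw [← mul_assoc, hcb, huw, ← hca]; ac_rfl)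
  obtain ⟨v, rfl⟩ := hu b fun j => hab.symm.dvd_of_dvd_mul_left ⟨w j, (hbw j).symm⟩
  exact ⟨↑v⁻¹ * a, funext fun j => by
    rw [Pi.smul_apply, smul_eq_mul, mul_assoc, ← hbw, Units.inv_mul_cancel_left]⟩

theorem eq_C_coeff_zero_of_isHomogeneous_mul {σ R : Type*} [CommRing R] [IsDomain R] {d : ℕ}
    {r u : MvPolynomial σ R} (hu : u.IsHomogeneous d) (hu0 : u ≠ 0)
    (hru : (r * u).IsHomogeneous d) : r = C (coeff 0 r) := by
  rcases eq_or_ne r 0 with rfl | hr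
  · simp
  refine totalDegree_eq_zero_iff_eq_C.1 ?_
  have := hru.totalDegree (mul_ne_zero hr hu0)
  rw [totalDegree_mul_of_isDomain hr hu0, hu.totalDegree hu0] at this
  omega

theorem stmt_7_general (K : Type*) [Field K] (d μ : ℕ)
    (u p q : Fin 3 → MvPolynomial (Fin 2) K)
    (hu : ∀ i, (u i).IsHomogeneous d)
    (hgcd : ∀ r : MvPolynomial (Fin 2) K, (∀ i, r ∣ u i) → IsUnit r)
    (hp : ∀ i, (p i).IsHomogeneous μ)
    (hq : ∀ i, (q i).IsHomogeneous (d - μ))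
    (hμ : μ ≤ d)
    (hps : ∑ i, p i * u i = 0)
    (hqs : ∑ i, q i * u i = 0)
    (hind : ∀ a b : MvPolynomial (Fin 2) K,
      (∀ i, a * p i + b * q i = 0) → a = 0 ∧ b = 0) :
    ∃ c : K, c ≠ 0 ∧
      p 1 * q 2 - p 2 * q 1 = C c * u 0 ∧
      p 2 * q 0 - p 0 * q 2 = C c * u 1 ∧
      p 0 * q 1 - p 1 * q 0 = C c * u 2 := by
  have hw0 : p ⨯₃ q ≠ 0 := cross_ne_zero_of_linearIndependent <|
    LinearIndependent.pair_iff.2 fun a b h => hind a b fun i => by simpa using congrFun h i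
  have huw : u ⨯₃ (p ⨯₃ q) = 0 := by
    rw [cross_cross_eq_smul_sub_smul', dotProduct_comm]
    simp [dotProduct, hps, hqs]
  obtain ⟨r, hr⟩ := exists_eq_smul_of_mul_eq_mul hgcd hw0 (mul_eq_mul_of_cross_eq_zero huw)
  obtain ⟨i, hi⟩ : ∃ i, u i ≠ 0 := by
    by_contra! h
    exact hw0 (by rw [hr, show u = 0 from funext h, smul_zero])
  have hrC : r = C (coeff 0 r) := eq_C_coeff_zero_of_isHomogeneous_mul (hu i) hi <| by
    simpa [hr, Nat.add_sub_cancel' hμ] using isHomogeneous_cross_apply hp hq i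
  rw [hrC] at hr
  refine ⟨coeff 0 r, fun hc => hw0 (by rw [hr, hc, map_zero, zero_smul]), ?_⟩
  exact ⟨congrFun hr 0, congrFun hr 1, congrFun hr 2⟩

/-- Hilbert–Burch factorization: if (p,q) is a μ-basis of the syzygy module of
(u0,u1,u2), then p × q = c·(u0,u1,u2) for some nonzero constant c ∈ K. -/
theorem stmt_7 (K : Type*) [Field K] (d μ : ℕ) (hd : 1 ≤ d)
    (u p q : Fin 3 → MvPolynomial (Fin 2) K)
    (hu : ∀ i, (u i).IsHomogeneous d)
    (hgcd : ∀ r : MvPolynomial (Fin 2) K, (∀ i, r ∣ u i) → IsUnit r)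
    (hp : ∀ i, (p i).IsHomogeneous μ)
    (hq : ∀ i, (q i).IsHomogeneous (d - μ))
    (hμ : μ ≤ d)
    (hps : ∑ i, p i * u i = 0)
    (hqs : ∑ i, q i * u i = 0)
    (hgen : ∀ v : Fin 3 → MvPolynomial (Fin 2) K, (∑ i, v i * u i = 0) →
      ∃ a b : MvPolynomial (Fin 2) K, ∀ i, v i = a * p i + b * q i)
    (hind : ∀ a b : MvPolynomial (Fin 2) K,
      (∀ i, a * p i + b * q i = 0) → a = 0 ∧ b = 0) :
    ∃ c : K, c ≠ 0 ∧
      p 1 * q 2 - p 2 * q 1 = C c * u 0 ∧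
      p 2 * q 0 - p 0 * q 2 = C c * u 1 ∧
      p 0 * q 1 - p 1 * q 0 = C c * u 2 :=
  stmt_7_general K d μ u p q hu hgcd hp hq hμ hps hqs hind
end

section
/- If (p, q) is a μ-basis of a parametrization given by (u0,u1,u2) homogeneous of degree d with gcd 1, and L = (v0,v1,v2) is any homogeneous syzygy of degree δ, then there exist homogeneous polynomials a, b ∈ K[t0,t1] of degrees δ-μ and δ-(d-μ) respectively such that L = a·p + b·q (where a term is zero if the required degree is negative). -/
open MvPolynomial

attribute [local instance] MvPolynomial.gradedAlgebra in
theorem MvPolynomial.homogeneousComponent_mul_of_isHomogeneous_right {σ R : Type*}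
    [CommSemiring R] {φ ψ : MvPolynomial σ R} {m : ℕ} (hψ : ψ.IsHomogeneous m) (n : ℕ) :
    homogeneousComponent n (φ * ψ) =
      if m ≤ n then homogeneousComponent (n - m) φ * ψ else 0 := by
  simp only [← decomposition.decompose'_apply]
  exact DirectSum.coe_decompose_mul_of_right_mem (homogeneousSubmodule σ R) n hψ

theorem MvPolynomial.exists_homogeneous_coeffs_of_combination {σ R ι : Type*}
    [CommSemiring R] {m n δ : ℕ} {p q v : ι → MvPolynomial σ R}
    (hp : ∀ i, (p i).IsHomogeneous m) (hq : ∀ i, (q i).IsHomogeneous n)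
    (hv : ∀ i, (v i).IsHomogeneous δ) {a b : MvPolynomial σ R}
    (hab : ∀ i, v i = a * p i + b * q i) :
    ∃ a' b' : MvPolynomial σ R,
      (m ≤ δ → a'.IsHomogeneous (δ - m)) ∧ (δ < m → a' = 0) ∧
      (n ≤ δ → b'.IsHomogeneous (δ - n)) ∧ (δ < n → b' = 0) ∧
      ∀ i, v i = a' * p i + b' * q i := by
  refine ⟨if m ≤ δ then homogeneousComponent (δ - m) a else 0,
    if n ≤ δ then homogeneousComponent (δ - n) b else 0,
    fun h => by simpa only [if_pos h] using homogeneousComponent_isHomogeneous _ _,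
    fun h => if_neg (by omega),
    fun h => by simpa only [if_pos h] using homogeneousComponent_isHomogeneous _ _,
    fun h => if_neg (by omega), fun i => ?_⟩
  -- only the degree-δ components of a and b can contribute to the degree-δ polynomial v i
  calc v i = homogeneousComponent δ (a * p i + b * q i) := by
        rw [← hab i, homogeneousComponent_eq_self (hv i)]
    _ = _ := by
        rw [map_add, homogeneousComponent_mul_of_isHomogeneous_right (hp i),
          homogeneousComponent_mul_of_isHomogeneous_right (hq i)]
        split_ifs <;> simp only [zero_mul, add_zero, zero_add]

theorem stmt_8_general (K : Type*) [Field K] (d μ δ : ℕ)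
    (u p q v : Fin 3 → MvPolynomial (Fin 2) K)
    (hp : ∀ i, (p i).IsHomogeneous μ)
    (hq : ∀ i, (q i).IsHomogeneous (d - μ))
    (hgen : ∀ w : Fin 3 → MvPolynomial (Fin 2) K, (∑ i, w i * u i = 0) →
      ∃ a b : MvPolynomial (Fin 2) K, ∀ i, w i = a * p i + b * q i)
    (hv : ∀ i, (v i).IsHomogeneous δ)
    (hvs : ∑ i, v i * u i = 0) :
    ∃ a b : MvPolynomial (Fin 2) K,
      (μ ≤ δ → a.IsHomogeneous (δ - μ)) ∧ (δ < μ → a = 0) ∧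
      ((d - μ) ≤ δ → b.IsHomogeneous (δ - (d - μ))) ∧ (δ < d - μ → b = 0) ∧
      ∀ i, v i = a * p i + b * q i := by
  obtain ⟨a, b, hab⟩ := hgen v hvs
  exact exists_homogeneous_coeffs_of_combination hp hq hv hab

/-- If (p,q) is a μ-basis and L = (v0,v1,v2) is a homogeneous syzygy of degree δ,
then L = a·p + b·q with a, b homogeneous of degrees δ-μ and δ-(d-μ),
a term being zero when the required degree is negative. -/
theorem stmt_8 (K : Type*) [Field K] (d μ δ : ℕ) (hd : 1 ≤ d) (hμ : μ ≤ d)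
    (u p q v : Fin 3 → MvPolynomial (Fin 2) K)
    (hu : ∀ i, (u i).IsHomogeneous d)
    (hgcd : ∀ r : MvPolynomial (Fin 2) K, (∀ i, r ∣ u i) → IsUnit r)
    (hp : ∀ i, (p i).IsHomogeneous μ)
    (hq : ∀ i, (q i).IsHomogeneous (d - μ))
    (hps : ∑ i, p i * u i = 0)
    (hqs : ∑ i, q i * u i = 0)
    (hgen : ∀ w : Fin 3 → MvPolynomial (Fin 2) K, (∑ i, w i * u i = 0) →
      ∃ a b : MvPolynomial (Fin 2) K, ∀ i, w i = a * p i + b * q i)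
    (hv : ∀ i, (v i).IsHomogeneous δ)
    (hvs : ∑ i, v i * u i = 0) :
    ∃ a b : MvPolynomial (Fin 2) K,
      (μ ≤ δ → a.IsHomogeneous (δ - μ)) ∧ (δ < μ → a = 0) ∧
      ((d - μ) ≤ δ → b.IsHomogeneous (δ - (d - μ))) ∧ (δ < d - μ → b = 0) ∧
      ∀ i, v i = a * p i + b * q i :=
  stmt_8_general K d μ δ u p q v hp hq hgen hv hvs
end
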